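/- Consider the impartial game on ℕ whose positions are natural numbers x, with available moves determined as follows: from x one may move to x-1 (when x > 0) via a 'loop' move, and additionally there is a predicate g : ℕ → Bool (g(x) = true meaning there exists a winning auxiliary move from x) which is eventually 2-periodic. Then the sequence of outcomes (P or N) of positions x is eventually periodic with period at most 2. -/
import Mathlib


/-- Abstract outcome recursion: position `x ∈ ℕ`, with a 'loop' move `x → x-1` when
`x > 0`, and a predicate `g` where `g x = true` means there is a winning auxiliary move
from `x`.  Under normal play, `x` is an N-position iff `g x = true`, or `x > 0` and
`x - 1` is a P-position. -/
def isN (g : ℕ → Bool) : ℕ → Prop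
  | 0 => g 0 = true
  | x + 1 => g (x + 1) = true ∨ ¬ isN g x

lemma isN_two_step (g : ℕ → Bool) (x : ℕ) :
    isN g (x + 2) ↔ (g (x + 2) = true ∨ (¬ g (x + 1) = true ∧ isN g x)) := by
  show (g (x+2) = true ∨ ¬ isN g (x+1)) ↔ _
  have : isN g (x+1) ↔ (g (x+1) = true ∨ ¬ isN g x) := Iff.rfl
  rw [this]
  tauto

/-- If `g` is eventually 2-periodic, then the sequence of outcomes is eventually
periodic with period (at most, i.e. dividing) 2. -/
theorem outcome_eventually_two_periodic (g : ℕ → Bool)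
    (h : ∃ x₀, ∀ x, x₀ ≤ x → g (x + 2) = g x) :
    ∃ x₁, ∀ x, x₁ ≤ x → (isN g (x + 2) ↔ isN g x) := by
  obtain ⟨x₀, hp⟩ := h
  refine ⟨x₀ + 2, fun x hx => ?_⟩
  obtain ⟨y, rfl⟩ : ∃ y, x = y + 2 := ⟨x - 2, by omega⟩
  have hy : x₀ ≤ y := by omega
  have h1 : g (y + 4) = g (y + 2) := hp (y + 2) (by omega)
  have h2 : g (y + 3) = g (y + 1) := hp (y + 1) (by omega)
  rw [show y + 2 + 2 = y + 2 + 2 from rfl, isN_two_step g (y + 2), isN_two_step g y]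
  rw [show y + 2 + 2 = y + 4 from rfl, show y + 2 + 1 = y + 3 from rfl, h1, h2]
  tauto
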